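/- Weighted calibration transfer: let S > 0 be a constant, Γ⁻¹ : ℝ≥0 → ℝ≥0 concave, non-decreasing, Γ⁻¹(0)=0, and k ≥ 1. If nonnegative random variables D, E satisfy, for a positive random weight W with 𝔼[W] = S, the pointwise bound D ≤ k·W·Γ⁻¹(E/W), then 𝔼[D] ≤ k·S·Γ⁻¹(𝔼[E]/S). -/
import Mathlib


open MeasureTheory

theorem stmt9 {Ω : Type*} [MeasurableSpace Ω] (μ : Measure Ω) [IsProbabilityMeasure μ]
    (Γinv : ℝ → ℝ) (hconc : ConcaveOn ℝ (Set.Ici 0) Γinv)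
    (hmono : MonotoneOn Γinv (Set.Ici 0)) (h0 : Γinv 0 = 0)
    (k : ℝ) (hk : 1 ≤ k) (S : ℝ) (hS : 0 < S)
    (W D E : Ω → ℝ) (hW : ∀ ω, 0 < W ω) (hWint : Integrable W μ)
    (hWS : ∫ ω, W ω ∂μ = S)
    (hD : Integrable D μ) (hE : Integrable E μ)
    (hDnn : ∀ ω, 0 ≤ D ω) (hEnn : ∀ ω, 0 ≤ E ω)
    (hbd : ∀ ω, D ω ≤ k * W ω * Γinv (E ω / W ω)) :
    ∫ ω, D ω ∂μ ≤ k * S * Γinv ((∫ ω, E ω ∂μ) / S) := by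
  have hk0 : 0 < k := lt_of_lt_of_le one_pos hk
  set x0 : ℝ := (∫ ω, E ω ∂μ) / S with hx0
  have hEint_nn : 0 ≤ ∫ ω, E ω ∂μ := integral_nonneg hEnn
  have hx0nn : 0 ≤ x0 := div_nonneg hEint_nn hS.le
  rcases eq_or_lt_of_le hx0nn with hx0eq | hx0pos
  · -- x0 = 0 : then ∫ E = 0, so E = 0 a.e., so D ≤ 0 a.e.
    have hEzero : ∫ ω, E ω ∂μ = 0 := by
      have := hx0eq.symm
      rw [hx0, div_eq_iff hS.ne'] at this
      simpa using this
    have hEae : E =ᵐ[μ] 0 := by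
      rw [← integral_eq_zero_iff_of_nonneg hEnn hE]
      exact hEzero
    have hDae : ∀ᵐ ω ∂μ, D ω ≤ 0 := by
      filter_upwards [hEae] with ω hω
      have := hbd ω
      rw [hω] at this
      simp only [Pi.zero_apply, zero_div, h0, mul_zero] at this
      exact this
    have : ∫ ω, D ω ∂μ ≤ 0 := integral_nonpos_of_ae hDae
    rw [← hx0eq, h0]
    simpa using this
  · -- x0 > 0 : supporting line for the concave function at x0.
    set c : ℝ := sSup {s : ℝ | ∃ y > x0, s = (Γinv y - Γinv x0) / (y - x0)} with hc
    have hne : {s : ℝ | ∃ y > x0, s = (Γinv y - Γinv x0) / (y - x0)}.Nonempty :=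
      ⟨(Γinv (x0 + 1) - Γinv x0) / (x0 + 1 - x0), x0 + 1, by linarith, rfl⟩
    have hub : ∀ x ∈ Set.Ici (0 : ℝ), x < x0 →
        (Γinv x0 - Γinv x) / (x0 - x) ∈
          upperBounds {s : ℝ | ∃ y > x0, s = (Γinv y - Γinv x0) / (y - x0)} := by
      rintro x hx hxlt s ⟨y, hy, rfl⟩
      exact hconc.slope_anti_adjacent hx (Set.mem_Ici.mpr (le_trans (Set.mem_Ici.mp hx) (by linarith))) hxlt hy
    have hbdd : BddAbove {s : ℝ | ∃ y > x0, s = (Γinv y - Γinv x0) / (y - x0)} :=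
      ⟨_, hub 0 Set.self_mem_Ici hx0pos⟩
    -- supporting line inequality
    have hsupp : ∀ x ∈ Set.Ici (0 : ℝ), Γinv x ≤ Γinv x0 + c * (x - x0) := by
      intro x hx
      rcases lt_trichotomy x x0 with hlt | heq | hgt
      · have hcle : c ≤ (Γinv x0 - Γinv x) / (x0 - x) := csSup_le hne (hub x hx hlt)
        have hpos : 0 < x0 - x := by linarith
        have h2 : c * (x0 - x) ≤ Γinv x0 - Γinv x := by
          have := mul_le_mul_of_nonneg_right hcle hpos.le
          rwa [div_mul_cancel₀ _ hpos.ne'] at this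
        linarith [h2]
      · subst heq; simp
      · have hmem : (Γinv x - Γinv x0) / (x - x0) ∈
            {s : ℝ | ∃ y > x0, s = (Γinv y - Γinv x0) / (y - x0)} := ⟨x, hgt, rfl⟩
        have hle : (Γinv x - Γinv x0) / (x - x0) ≤ c := le_csSup hbdd hmem
        have hpos : 0 < x - x0 := by linarith
        have h2 : Γinv x - Γinv x0 ≤ c * (x - x0) := by
          have := mul_le_mul_of_nonneg_right hle hpos.le
          rwa [div_mul_cancel₀ _ hpos.ne'] at this
        linarith
    -- pointwise bound by an integrable affine function
    have hpt : ∀ ω, D ω ≤ k * (Γinv x0 * W ω + c * E ω - c * x0 * W ω) := by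
      intro ω
      refine le_trans (hbd ω) ?_
      have hWω := hW ω
      have hx : E ω / W ω ∈ Set.Ici (0 : ℝ) := div_nonneg (hEnn ω) hWω.le
      have h1 : Γinv (E ω / W ω) ≤ Γinv x0 + c * (E ω / W ω - x0) := hsupp _ hx
      have h2 : W ω * Γinv (E ω / W ω) ≤ W ω * (Γinv x0 + c * (E ω / W ω - x0)) :=
        mul_le_mul_of_nonneg_left h1 hWω.le
      have h3 : W ω * (Γinv x0 + c * (E ω / W ω - x0))
          = Γinv x0 * W ω + c * E ω - c * x0 * W ω := by
        field_simp
        ring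
      calc k * W ω * Γinv (E ω / W ω) = k * (W ω * Γinv (E ω / W ω)) := by ring
        _ ≤ k * (Γinv x0 * W ω + c * E ω - c * x0 * W ω) := by
            rw [← h3]; exact mul_le_mul_of_nonneg_left h2 hk0.le
    have hint : Integrable (fun ω => k * (Γinv x0 * W ω + c * E ω - c * x0 * W ω)) μ := by
      apply Integrable.const_mul
      exact ((hWint.const_mul _).add (hE.const_mul _)).sub (hWint.const_mul _)
    have hle : ∫ ω, D ω ∂μ ≤ ∫ ω, k * (Γinv x0 * W ω + c * E ω - c * x0 * W ω) ∂μ :=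
      integral_mono hD hint hpt
    have hcalc : ∫ ω, k * (Γinv x0 * W ω + c * E ω - c * x0 * W ω) ∂μ
        = k * (Γinv x0 * S + c * (∫ ω, E ω ∂μ) - c * x0 * S) := by
      rw [integral_const_mul]
      congr 1
      have h1 : Integrable (fun ω => Γinv x0 * W ω + c * E ω) μ :=
        (hWint.const_mul _).add (hE.const_mul _)
      have h2 : Integrable (fun ω => c * x0 * W ω) μ := hWint.const_mul _
      have h3 : Integrable (fun ω => Γinv x0 * W ω) μ := hWint.const_mul _
      have h4 : Integrable (fun ω => c * E ω) μ := hE.const_mul _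
      rw [integral_sub h1 h2, integral_add h3 h4,
        integral_const_mul, integral_const_mul, integral_const_mul, hWS]
    have hES : ∫ ω, E ω ∂μ = x0 * S := by
      rw [hx0]; field_simp
    refine le_trans hle ?_
    rw [hcalc, hES]
    have : k * (Γinv x0 * S + c * (x0 * S) - c * x0 * S) = k * S * Γinv x0 := by ring
    linarith
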